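/- arXiv:math/9906078 — 4 statements merged into one kernel-verified Lean document; each statement's English description precedes it below -/
import Mathlib

section
/- Let R be a commutative ring and let u ∈ R be a unit. Then the map from the univariate polynomial ring R[X] to itself sending p to (formal derivative of p) + u·p is bijective. -/
open Polynomial

/-- For a commutative ring `R` and a unit `u ∈ R`, the map
`p ↦ p' + u * p` on the polynomial ring `R[X]` is bijective. -/
theorem derivative_add_unit_mul_bijective (R : Type*) [CommRing R] (u : R) (hu : IsUnit u) :
    Function.Bijective (fun p : Polynomial R =>
      Polynomial.derivative p + Polynomial.C u * p) := by
  obtain ⟨w, hw⟩ := hu.exists_right_inv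
  have ker : ∀ p : Polynomial R, derivative p + C u * p = 0 → p = 0 := by
    intro p hp
    by_contra hne
    have hc := congrArg (fun q : Polynomial R => q.coeff p.natDegree) hp
    simp only [coeff_add, coeff_zero, coeff_C_mul, coeff_derivative] at hc
    rw [coeff_eq_zero_of_natDegree_lt (Nat.lt_succ_self _), zero_mul, zero_add] at hc
    have : p.leadingCoeff = 0 := by
      calc p.leadingCoeff = (u * w) * p.coeff p.natDegree := by
            rw [hw, one_mul]; rfl
        _ = w * (u * p.coeff p.natDegree) := by ring
        _ = 0 := by rw [hc, mul_zero]
    exact hne (leadingCoeff_eq_zero.mp this)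
  have key : ∀ n (q : Polynomial R), q.natDegree ≤ n →
      ∃ p, derivative p + C u * p = q := by
    intro n
    induction n with
    | zero =>
      intro q hq
      refine ⟨C w * q, ?_⟩
      have hdq : derivative q = 0 := by
        rw [Polynomial.eq_C_of_natDegree_le_zero hq]; simp
      rw [derivative_mul, derivative_C, hdq]
      simp only [zero_mul, mul_zero, add_zero, zero_add]
      rw [← mul_assoc, ← C_mul, hw, C_1, one_mul]
    | succ n ih =>
      intro q hq
      have hdeg : (C w * derivative q).natDegree ≤ n := by
        refine le_trans (natDegree_mul_le) ?_
        have h1 : (derivative q).natDegree ≤ n :=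
          le_trans (natDegree_derivative_le q) (by omega)
        simpa using h1
      obtain ⟨p₁, hp₁⟩ := ih (-(C w * derivative q)) (by simpa using hdeg)
      refine ⟨C w * q + p₁, ?_⟩
      have hTw : derivative (C w * q) + C u * (C w * q) = C w * derivative q + q := by
        rw [derivative_mul, derivative_C, zero_mul, zero_add, ← mul_assoc, ← C_mul, hw,
          C_1, one_mul]
      rw [derivative_add, mul_add]
      calc derivative (C w * q) + derivative p₁ + (C u * (C w * q) + C u * p₁)
          = (derivative (C w * q) + C u * (C w * q)) + (derivative p₁ + C u * p₁) := by ring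
        _ = (C w * derivative q + q) + (-(C w * derivative q)) := by rw [hTw, hp₁]
        _ = q := by ring
  constructor
  · intro p₁ p₂ h
    simp only at h
    have : derivative (p₁ - p₂) + C u * (p₁ - p₂) = 0 := by
      rw [derivative_sub, mul_sub]
      rw [show derivative p₁ - derivative p₂ + (C u * p₁ - C u * p₂)
        = (derivative p₁ + C u * p₁) - (derivative p₂ + C u * p₂) by ring, h, sub_self]
    have := ker _ this
    exact sub_eq_zero.mp this
  · intro q
    obtain ⟨p, hp⟩ := key q.natDegree q le_rfl
    exact ⟨p, hp⟩
end

section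
/- Let R be a commutative ring, M an R-module, φ : M → M a bijective R-linear endomorphism, and r a natural number. Let M[y₁,…,y_r] := (Fin r →₀ ℕ) →₀ M, viewed as the module of polynomials in r variables y₁,…,y_r with coefficients in M (an element m assigns to a multi-exponent ν the coefficient of y^ν). For each i, the R-linear endomorphism D_i of M[y₁,…,y_r] defined by (D_i m)(ν) = (ν(i)+1)·m(ν + eᵢ) + φ(m(ν)), where eᵢ is the multi-exponent with a single 1 in position i (i.e., D_i = ∂/∂y_i + φ acting coefficientwise), is bijective. -/
/-- If `φ : M → M` is a bijective `R`-linear endomorphism, then for each `i` the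
operator `D_i = ∂/∂yᵢ + φ` (acting coefficientwise) on the module
`M[y₁,…,y_r] = (Fin r →₀ ℕ) →₀ M` of polynomials in `r` variables with
coefficients in `M` is bijective. -/
theorem pderiv_add_bijective_coeff_bijective
    (R : Type*) [CommRing R] (M : Type*) [AddCommGroup M] [Module R M]
    (φ : M →ₗ[R] M) (hφ : Function.Bijective φ) (r : ℕ) (i : Fin r)
    (D : ((Fin r →₀ ℕ) →₀ M) →ₗ[R] ((Fin r →₀ ℕ) →₀ M))
    (hD : ∀ (m : (Fin r →₀ ℕ) →₀ M) (ν : Fin r →₀ ℕ),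
      D m ν = (ν i + 1) • m (ν + Finsupp.single i 1) + φ (m ν)) :
    Function.Bijective D := by
  set ψ := (LinearEquiv.ofBijective φ hφ).symm with hψ
  have hφψ : ∀ x : M, φ (ψ x) = x := fun x =>
    (LinearEquiv.ofBijective φ hφ).apply_symm_apply x
  constructor
  · intro a b hab
    by_contra hne
    have hm0 : a - b ≠ 0 := sub_ne_zero.mpr hne
    have hDm : D (a - b) = 0 := by rw [map_sub, hab, sub_self]
    obtain ⟨ν, hνs, hmax⟩ := (a - b).support.exists_max_image (fun ν => ν i)
      (Finsupp.support_nonempty_iff.mpr hm0)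
    have h1 : (a - b) (ν + Finsupp.single i 1) = 0 := by
      by_contra h
      have := hmax _ (Finsupp.mem_support_iff.mpr h)
      simp [Finsupp.add_apply, Finsupp.single_eq_same] at this
    have h2 := hD (a - b) ν
    rw [hDm, h1, smul_zero, zero_add] at h2
    have h3 : (a - b) ν = 0 := hφ.1 (by rw [map_zero, ← h2]; rfl)
    exact Finsupp.mem_support_iff.mp hνs h3
  · intro n
    suffices H : ∀ d : ℕ, ∀ n : (Fin r →₀ ℕ) →₀ M,
        (∀ ν, n ν ≠ 0 → ν i < d) → ∃ m, D m = n by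
      refine H (n.support.sup (fun ν => ν i) + 1) n (fun ν hν => ?_)
      exact Nat.lt_succ_of_le (Finset.le_sup (f := fun ν => ν i)
        (Finsupp.mem_support_iff.mpr hν))
    intro d
    induction d with
    | zero =>
      intro n hn
      have : n = 0 := by
        ext ν
        by_contra h
        exact Nat.not_lt_zero _ (hn ν h)
      exact ⟨0, by rw [map_zero, this]⟩
    | succ d ih =>
      intro n hn
      set m₁ : (Fin r →₀ ℕ) →₀ M := n.mapRange ψ (map_zero ψ) with hm₁
      have hφm₁ : ∀ ν, φ (m₁ ν) = n ν := fun ν => by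
        rw [hm₁, Finsupp.mapRange_apply, hφψ]
      have hside : ∀ ν, (n - D m₁) ν ≠ 0 → ν i < d := by
        intro ν h
        have hne : m₁ (ν + Finsupp.single i 1) ≠ 0 := by
          intro h0
          apply h
          rw [Finsupp.sub_apply, hD, h0, smul_zero, zero_add, hφm₁, sub_self]
        have hn' : n (ν + Finsupp.single i 1) ≠ 0 := fun h0 => hne (by
          rw [hm₁, Finsupp.mapRange_apply, h0, map_zero])
        have := hn _ hn'
        simp [Finsupp.add_apply, Finsupp.single_eq_same] at this
        omega
      obtain ⟨m₂, hm₂⟩ := ih (n - D m₁) hside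
      exact ⟨m₁ + m₂, by rw [map_add, hm₂]; abel⟩
end

section
/- Let ℂ[y,z] be the polynomial ring in two variables y, z over ℂ, and define ℂ-linear operators D₁(p) = ∂p/∂y + z·p and D₂(p) = ∂p/∂z + y·p (formal partial derivatives). If p, q ∈ ℂ[y,z] satisfy D₂(p) = D₁(q), then there exists r ∈ ℂ[y,z] with p = D₁(r) and q = D₂(r). -/
namespace KoszulAux

open Polynomial Finset

noncomputable section

abbrev PP := Polynomial (Polynomial ℂ)

/-- coefficient-wise (inner-variable) derivative -/
def dm (p : PP) : PP :=
  ∑ k ∈ range (p.natDegree + 1), C (derivative (p.coeff k)) * X ^ k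

lemma coeff_dm (p : PP) (k : ℕ) : (dm p).coeff k = derivative (p.coeff k) := by
  rw [dm, finset_sum_coeff]
  simp only [coeff_C_mul, coeff_X_pow, mul_ite, mul_one, mul_zero]
  rw [Finset.sum_ite_eq (range _) k]
  split_ifs with h
  · rfl
  · rw [Finset.mem_range, not_lt] at h
    rw [coeff_eq_zero_of_natDegree_lt (by omega), map_zero]

/-- `D₂ = ∂_z + y·` (inner derivative plus outer variable multiplication) -/
def opA (p : PP) : PP := dm p + X * p

/-- `D₁ = ∂_y + z·` (outer derivative plus inner variable multiplication) -/
def opB (p : PP) : PP := derivative p + C X * p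

lemma coeff_opA_zero (t : PP) : (opA t).coeff 0 = derivative (t.coeff 0) := by
  simp [opA, coeff_dm, mul_coeff_zero]

lemma coeff_opA_succ (t : PP) (k : ℕ) :
    (opA t).coeff (k + 1) = derivative (t.coeff (k + 1)) + t.coeff k := by
  simp [opA, coeff_dm, coeff_X_mul]

lemma coeff_opB (t : PP) (k : ℕ) :
    (opB t).coeff k = t.coeff (k + 1) * ((k : Polynomial ℂ) + 1) + X * t.coeff k := by
  simp [opB, coeff_derivative, coeff_C_mul]

lemma opA_add (u v : PP) : opA (u + v) = opA u + opA v := by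
  ext k
  cases k with
  | zero => simp [coeff_opA_zero]
  | succ k => simp [coeff_opA_succ]; ring

lemma opA_zero : opA 0 = 0 := by
  ext k
  cases k with
  | zero => simp [coeff_opA_zero]
  | succ k => simp [coeff_opA_succ]

lemma opA_injective : Function.Injective opA := by
  have h0 : ∀ r : PP, opA r = 0 → r = 0 := by
    intro r hr
    by_contra hne
    have h1 : (opA r).coeff (r.natDegree + 1) = 0 := by rw [hr]; simp
    rw [coeff_opA_succ, coeff_natDegree_succ_eq_zero, map_zero, zero_add] at h1
    exact hne (leadingCoeff_eq_zero.mp h1)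
  intro u v huv
  have hneg : opA (-v) = - opA v := by
    have h := opA_add v (-v)
    rw [add_neg_cancel, opA_zero] at h
    linear_combination -h
  have : opA (u + (-v)) = 0 := by rw [opA_add, huv, hneg]; ring
  have := h0 _ this
  linear_combination this

/-- aux -/
lemma itd_add (k : ℕ) (f g : Polynomial ℂ) :
    derivative^[k] (f + g) = derivative^[k] f + derivative^[k] g := by
  induction k with
  | zero => rfl
  | succ k ih => rw [Function.iterate_succ_apply', Function.iterate_succ_apply',
      Function.iterate_succ_apply', ih, map_add]

/-- truncated "evaluate outer variable at minus inner derivative" functional -/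
def Ebd (N : ℕ) (p : PP) : Polynomial ℂ :=
  ∑ k ∈ range N, (-1 : ℂ) ^ k • (derivative^[k] (p.coeff k))

def Efn (p : PP) : Polynomial ℂ := Ebd (p.natDegree + 1) p

lemma Ebd_eq {p : PP} {N : ℕ} (h : p.natDegree < N) : Ebd N p = Efn p := by
  refine (Finset.sum_subset (Finset.range_subset_range.mpr h) fun k _ hk => ?_).symm
  rw [Finset.mem_range, not_lt] at hk
  rw [coeff_eq_zero_of_natDegree_lt (by omega), Polynomial.iterate_derivative_zero, smul_zero]

lemma Ebd_opA {r : PP} {N : ℕ} (h : r.natDegree + 1 < N) : Ebd N (opA r) = 0 := by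
  obtain ⟨M, rfl⟩ : ∃ M, N = M + 1 := ⟨N - 1, by omega⟩
  set G : ℕ → Polynomial ℂ := fun k => (-1 : ℂ) ^ k • derivative^[k + 1] (r.coeff k) with hG
  have key : Ebd (M + 1) (opA r) = G M := by
    rw [Ebd, Finset.sum_range_succ']
    have h0 : (-1 : ℂ) ^ 0 • derivative^[0] ((opA r).coeff 0) = G 0 := by
      simp [hG, coeff_opA_zero]
    rw [h0]
    have hstep : ∀ i ∈ range M,
        (-1 : ℂ) ^ (i + 1) • derivative^[i + 1] ((opA r).coeff (i + 1)) = G (i + 1) - G i := by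
      intro i _
      rw [coeff_opA_succ, itd_add, smul_add, hG]
      have h1 : derivative^[i + 1] (derivative (r.coeff (i + 1)))
          = derivative^[i + 1 + 1] (r.coeff (i + 1)) :=
        (Function.iterate_succ_apply derivative (i + 1) _).symm
      rw [h1]
      have h2 : (-1 : ℂ) ^ (i + 1) • derivative^[i + 1] (r.coeff i)
          = -((-1 : ℂ) ^ i • derivative^[i + 1] (r.coeff i)) := by
        rw [pow_succ]; rw [mul_smul]; simp
      rw [h2]; ring
    rw [Finset.sum_congr rfl hstep, Finset.sum_range_sub G]
    ring
  rw [key, hG]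
  have : r.coeff M = 0 := coeff_eq_zero_of_natDegree_lt (by omega)
  simp [this]

lemma iterate_derivative_X_mul (k : ℕ) (f : Polynomial ℂ) :
    derivative^[k + 1] (X * f)
      = X * derivative^[k + 1] f + ((k : ℂ) + 1) • derivative^[k] f := by
  induction k with
  | zero => simp [derivative_mul, add_comm]
  | succ k ih =>
    have h1 : derivative^[k + 1 + 1] (X * f) = derivative (derivative^[k + 1] (X * f)) :=
      Function.iterate_succ_apply' _ _ _
    have h2 : derivative (derivative^[k + 1] f) = derivative^[k + 1 + 1] f :=
      (Function.iterate_succ_apply' _ _ _).symm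
    have h3 : derivative (derivative^[k] f) = derivative^[k + 1] f :=
      (Function.iterate_succ_apply' _ _ _).symm
    rw [h1, ih, map_add, derivative_mul, derivative_X, derivative_smul, h2, h3, one_mul]
    push_cast
    rw [add_smul, one_smul]
    module

lemma Ebd_opB {p : PP} {N : ℕ} (h : p.natDegree + 1 < N) :
    Ebd N (opB p) = X * Ebd N p := by
  obtain ⟨M, rfl⟩ : ∃ M, N = M + 1 := ⟨N - 1, by omega⟩
  have expand : ∀ k, (-1 : ℂ) ^ k • derivative^[k] ((opB p).coeff k)
      = ((-1 : ℂ) ^ k * ((k : ℂ) + 1)) • derivative^[k] (p.coeff (k + 1))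
        + (-1 : ℂ) ^ k • derivative^[k] (X * p.coeff k) := by
    intro k
    rw [coeff_opB, itd_add, smul_add]
    congr 1
    have : p.coeff (k + 1) * ((k : Polynomial ℂ) + 1)
        = ((k : ℂ) + 1) • p.coeff (k + 1) := by
      rw [smul_eq_C_mul, map_add, map_natCast, map_one, mul_comm]
    rw [this, iterate_derivative_smul, smul_smul]
  rw [Ebd, Finset.sum_congr rfl fun k _ => expand k, Finset.sum_add_distrib]
  -- second sum: peel off k = 0 and use iterate_derivative_X_mul
  rw [Finset.sum_range_succ' (fun k => (-1 : ℂ) ^ k • derivative^[k] (X * p.coeff k)) M]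
  have hsplit : ∀ i ∈ range M,
      (-1 : ℂ) ^ (i + 1) • derivative^[i + 1] (X * p.coeff (i + 1))
        = (-1 : ℂ) ^ (i + 1) • (X * derivative^[i + 1] (p.coeff (i + 1)))
          + (-((-1 : ℂ) ^ i * ((i : ℂ) + 1))) • derivative^[i] (p.coeff (i + 1)) := by
    intro i _
    rw [iterate_derivative_X_mul, smul_add, smul_smul]
    congr 2
    rw [pow_succ]
    ring
  rw [Finset.sum_congr rfl hsplit, Finset.sum_add_distrib]
  -- first sum: last term vanishes
  have hfirst : ∑ k ∈ range (M + 1),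
      ((-1 : ℂ) ^ k * ((k : ℂ) + 1)) • derivative^[k] (p.coeff (k + 1))
      = ∑ i ∈ range M, ((-1 : ℂ) ^ i * ((i : ℂ) + 1)) • derivative^[i] (p.coeff (i + 1)) := by
    rw [Finset.sum_range_succ]
    have : p.coeff (M + 1) = 0 := coeff_eq_zero_of_natDegree_lt (by omega)
    simp [this]
  rw [hfirst]
  have hcancel : ∑ i ∈ range M, ((-1 : ℂ) ^ i * ((i : ℂ) + 1)) • derivative^[i] (p.coeff (i + 1))
      + (∑ i ∈ range M, (-1 : ℂ) ^ (i + 1) • (X * derivative^[i + 1] (p.coeff (i + 1)))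
        + ∑ i ∈ range M, (-((-1 : ℂ) ^ i * ((i : ℂ) + 1))) • derivative^[i] (p.coeff (i + 1))
        + (-1 : ℂ) ^ 0 • derivative^[0] (X * p.coeff 0))
      = ∑ i ∈ range M, (-1 : ℂ) ^ (i + 1) • (X * derivative^[i + 1] (p.coeff (i + 1)))
        + X * p.coeff 0 := by
    have : ∀ i ∈ range M, (-((-1 : ℂ) ^ i * ((i : ℂ) + 1))) • derivative^[i] (p.coeff (i + 1))
        = -(((-1 : ℂ) ^ i * ((i : ℂ) + 1)) • derivative^[i] (p.coeff (i + 1))) := by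
      intro i _; rw [neg_smul]
    rw [Finset.sum_congr rfl this, Finset.sum_neg_distrib]
    simp
    ring
  rw [hcancel]
  -- now identify with X * Ebd
  rw [Ebd, Finset.mul_sum, Finset.sum_range_succ'
    (fun k => X * ((-1 : ℂ) ^ k • derivative^[k] (p.coeff k))) M]
  simp [mul_smul_comm]

lemma exists_opA {u : PP} (h : Efn u = 0) : ∃ r : PP, opA r = u := by
  set n := u.natDegree with hn
  set ρ : ℕ → Polynomial ℂ := fun j =>
    ∑ i ∈ range (n + 1), (-1 : ℂ) ^ i • derivative^[i] (u.coeff (j + i + 1)) with hρ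
  have hρ_zero : ∀ k, n ≤ k → ρ k = 0 := by
    intro k hk
    rw [hρ]
    refine Finset.sum_eq_zero fun i _ => ?_
    rw [coeff_eq_zero_of_natDegree_lt (by omega), Polynomial.iterate_derivative_zero, smul_zero]
  set r : PP := ∑ j ∈ range (n + 1), C (ρ j) * X ^ j with hr
  have coeff_r : ∀ k, r.coeff k = ρ k := by
    intro k
    rw [hr, finset_sum_coeff]
    simp only [coeff_C_mul, coeff_X_pow, mul_ite, mul_one, mul_zero]
    rw [Finset.sum_ite_eq (range _) k]
    split_ifs with hk
    · rfl
    · rw [Finset.mem_range, not_lt] at hk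
      exact (hρ_zero k (by omega)).symm
  have hdρ : ∀ j, derivative (ρ j)
      = ∑ i ∈ range (n + 1), (-1 : ℂ) ^ i • derivative^[i + 1] (u.coeff (j + i + 1)) := by
    intro j
    rw [hρ, map_sum]
    refine Finset.sum_congr rfl fun i _ => ?_
    rw [derivative_smul, Function.iterate_succ_apply' derivative i]
  refine ⟨r, Polynomial.ext fun k => ?_⟩
  cases k with
  | zero =>
    rw [coeff_opA_zero, coeff_r, hdρ]
    -- use Efn u = 0
    have hE : ∑ k ∈ range (n + 1), (-1 : ℂ) ^ k • derivative^[k] (u.coeff k) = 0 := h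
    rw [Finset.sum_range_succ'] at hE
    simp only [pow_zero, one_smul, Function.iterate_zero, id_eq] at hE
    have hu0 : u.coeff 0
        = ∑ i ∈ range n, (-1 : ℂ) ^ i • derivative^[i + 1] (u.coeff (i + 1)) := by
      have := hE
      have h2 : ∀ i ∈ range n, (-1 : ℂ) ^ (i + 1) • derivative^[i + 1] (u.coeff (i + 1))
          = -((-1 : ℂ) ^ i • derivative^[i + 1] (u.coeff (i + 1))) := by
        intro i _
        rw [pow_succ, mul_comm, mul_smul]
        simp
      rw [Finset.sum_congr rfl h2, Finset.sum_neg_distrib] at this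
      linear_combination this
    rw [Finset.sum_range_succ]
    have hz : u.coeff (0 + n + 1) = 0 := coeff_eq_zero_of_natDegree_lt (by omega)
    rw [hz]
    simp only [Polynomial.iterate_derivative_zero, smul_zero, add_zero]
    rw [hu0]
    refine (Finset.sum_congr rfl fun i _ => ?_).symm
    rw [zero_add]
  | succ k =>
    rw [coeff_opA_succ, coeff_r, coeff_r, hdρ]
    rw [Finset.sum_range_succ]
    have hz : u.coeff (k + 1 + n + 1) = 0 := coeff_eq_zero_of_natDegree_lt (by omega)
    rw [hz]
    simp only [Polynomial.iterate_derivative_zero, smul_zero, add_zero]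
    simp only [hρ]
    rw [Finset.sum_range_succ' (fun i => (-1 : ℂ) ^ i • derivative^[i] (u.coeff (k + i + 1))) n]
    simp only [pow_zero, one_smul, Function.iterate_zero, id_eq]
    have hcomb : ∀ i ∈ range n,
        (-1 : ℂ) ^ i • derivative^[i + 1] (u.coeff (k + 1 + i + 1))
          + (-1 : ℂ) ^ (i + 1) • derivative^[i + 1] (u.coeff (k + (i + 1) + 1)) = 0 := by
      intro i _
      have he : k + 1 + i + 1 = k + (i + 1) + 1 := by omega
      rw [he, pow_succ, mul_comm, mul_smul]
      simp
    have : ∑ i ∈ range n, (-1 : ℂ) ^ i • derivative^[i + 1] (u.coeff (k + 1 + i + 1))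
        + (∑ i ∈ range n, (-1 : ℂ) ^ (i + 1) • derivative^[i + 1] (u.coeff (k + (i + 1) + 1))
          + u.coeff (k + 0 + 1))
        = u.coeff (k + 0 + 1) := by
      rw [← add_assoc, ← Finset.sum_add_distrib, Finset.sum_congr rfl hcomb]
      simp
    rw [this]

lemma opA_opB_comm (s : PP) : opA (opB s) = opB (opA s) := by
  refine Polynomial.ext fun k => ?_
  cases k with
  | zero =>
    rw [coeff_opA_zero, coeff_opB, coeff_opB, coeff_opA_succ, coeff_opA_zero]
    simp only [Nat.cast_zero, zero_add, mul_one]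
    rw [map_add, derivative_mul, derivative_X, one_mul]
    ring
  | succ k =>
    rw [coeff_opA_succ, coeff_opB, coeff_opB, coeff_opB, coeff_opA_succ, coeff_opA_succ]
    have hc : derivative (((k + 1 : ℕ) : Polynomial ℂ) + 1) = 0 := by simp
    rw [map_add, derivative_mul, derivative_mul, derivative_X, hc]
    push_cast
    ring

lemma main_PP {u v : PP} (h : opB u = opA v) : ∃ r : PP, opA r = u ∧ opB r = v := by
  set N := u.natDegree + v.natDegree + 2 with hN
  have h1 : Ebd N (opA v) = 0 := Ebd_opA (by omega)
  have h2 : Ebd N (opB u) = X * Ebd N u := Ebd_opB (by omega)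
  have h3 : X * Ebd N u = 0 := by rw [← h2, h, h1]
  have h4 : Ebd N u = 0 := by
    rcases mul_eq_zero.mp h3 with h' | h'
    · exact absurd h' X_ne_zero
    · exact h'
  have h5 : Efn u = 0 := by rw [← Ebd_eq (show u.natDegree < N by omega), h4]
  obtain ⟨r, hr⟩ := exists_opA h5
  refine ⟨r, hr, ?_⟩
  apply opA_injective
  rw [opA_opB_comm, hr, h]

/-! ### transport to `MvPolynomial (Fin 2) ℂ` -/

def ψ : MvPolynomial (Fin 1) ℂ ≃ₐ[ℂ] Polynomial ℂ :=
  (MvPolynomial.finSuccEquiv ℂ 0).trans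
    (Polynomial.mapAlgEquiv (MvPolynomial.isEmptyAlgEquiv ℂ (Fin 0)))

def φ : MvPolynomial (Fin 2) ℂ ≃ₐ[ℂ] PP :=
  (MvPolynomial.finSuccEquiv ℂ 1).trans (Polynomial.mapAlgEquiv ψ)

lemma φ_X0 : φ (MvPolynomial.X 0) = X := by
  rw [φ, AlgEquiv.trans_apply, MvPolynomial.finSuccEquiv_X_zero]
  simp

lemma φ_X1 : φ (MvPolynomial.X 1) = C X := by
  have h1 : (1 : Fin 2) = Fin.succ 0 := rfl
  rw [φ, AlgEquiv.trans_apply, h1, MvPolynomial.finSuccEquiv_X_succ]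
  rw [coe_mapAlgEquiv, Polynomial.map_C]
  congr 1
  simp [ψ, MvPolynomial.finSuccEquiv_X_zero]

lemma φ_C (a : ℂ) : φ (MvPolynomial.C a) = C (C a) := by
  rw [show (MvPolynomial.C a : MvPolynomial (Fin 2) ℂ) = algebraMap ℂ _ a from rfl,
    AlgEquiv.commutes, Polynomial.algebraMap_apply, Polynomial.algebraMap_apply]
  rfl

lemma dm_CC (c : Polynomial ℂ) : dm (C c) = C (derivative c) := by
  refine Polynomial.ext fun k => ?_
  rw [coeff_dm, coeff_C, coeff_C]
  split_ifs <;> simp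

lemma dm_mul_X (u : PP) : dm (u * X) = dm u * X := by
  rw [mul_comm, mul_comm (dm u)]
  refine Polynomial.ext fun k => ?_
  cases k with
  | zero => simp [coeff_dm, mul_coeff_zero]
  | succ k => simp [coeff_dm, coeff_X_mul]

lemma dm_mul_CX (u : PP) : dm (u * C X) = dm u * C X + u := by
  refine Polynomial.ext fun k => ?_
  rw [coeff_add, coeff_dm, coeff_mul_C, coeff_mul_C, coeff_dm, derivative_mul, derivative_X]
  ring

lemma φ_pderiv0 (s : MvPolynomial (Fin 2) ℂ) :
    φ (MvPolynomial.pderiv 0 s) = derivative (φ s) := by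
  induction s using MvPolynomial.induction_on with
  | C a => rw [MvPolynomial.pderiv_C, map_zero, φ_C, derivative_C]
  | add p q hp hq =>
    simp only [map_add, hp, hq, derivative_add]
  | mul_X p i hp =>
    have h01 : i = 0 ∨ i = 1 := by clear hp; revert i; decide
    rcases h01 with rfl | rfl
    · rw [MvPolynomial.pderiv_mul, MvPolynomial.pderiv_X_self, mul_one, map_add, map_mul,
        hp, φ_X0, map_mul, φ_X0, derivative_mul, derivative_X, mul_one]
    · rw [MvPolynomial.pderiv_mul, MvPolynomial.pderiv_X_of_ne (by decide), mul_zero,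
        add_zero, map_mul, hp, φ_X1, map_mul, φ_X1, derivative_mul, derivative_C, mul_zero,
        add_zero]

lemma φ_pderiv1 (s : MvPolynomial (Fin 2) ℂ) :
    φ (MvPolynomial.pderiv 1 s) = dm (φ s) := by
  induction s using MvPolynomial.induction_on with
  | C a => rw [MvPolynomial.pderiv_C, map_zero, φ_C, dm_CC, derivative_C, map_zero]
  | add p q hp hq =>
    rw [map_add, map_add, map_add]
    have : dm (φ p + φ q) = dm (φ p) + dm (φ q) := by
      refine Polynomial.ext fun k => ?_
      simp [coeff_dm]
    rw [this, hp, hq]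
  | mul_X p i hp =>
    have h01 : i = 0 ∨ i = 1 := by clear hp; revert i; decide
    rcases h01 with rfl | rfl
    · rw [MvPolynomial.pderiv_mul, MvPolynomial.pderiv_X_of_ne (by decide), mul_zero,
        add_zero, map_mul, hp, φ_X0, map_mul, φ_X0, dm_mul_X]
    · rw [MvPolynomial.pderiv_mul, MvPolynomial.pderiv_X_self, mul_one, map_add, map_mul,
        hp, φ_X1, map_mul, φ_X1, dm_mul_CX]

end

end KoszulAux

open MvPolynomial

/-- On `ℂ[y,z]` with `D₁ = ∂/∂y + z·` and `D₂ = ∂/∂z + y·`: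
if `D₂ p = D₁ q` then `p = D₁ r` and `q = D₂ r` for some `r`
(vanishing of the first Koszul cohomology). -/
theorem koszul_H1_vanishing
    (p q : MvPolynomial (Fin 2) ℂ)
    (h : pderiv 1 p + X 0 * p = pderiv 0 q + X 1 * q) :
    ∃ r : MvPolynomial (Fin 2) ℂ,
      p = pderiv 0 r + X 1 * r ∧ q = pderiv 1 r + X 0 * r := by
  classical
  have hφ : KoszulAux.opB (KoszulAux.φ q) = KoszulAux.opA (KoszulAux.φ p) := by
    have := congrArg KoszulAux.φ h
    rw [map_add, map_add, map_mul, map_mul, KoszulAux.φ_pderiv1, KoszulAux.φ_pderiv0,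
      KoszulAux.φ_X0, KoszulAux.φ_X1] at this
    rw [KoszulAux.opB, KoszulAux.opA, ← this]
  obtain ⟨rr, hA, hB⟩ := KoszulAux.main_PP hφ
  refine ⟨KoszulAux.φ.symm rr, ?_, ?_⟩
  · apply KoszulAux.φ.injective
    rw [map_add, map_mul, KoszulAux.φ_pderiv0, KoszulAux.φ_X1,
      AlgEquiv.apply_symm_apply]
    rw [show Polynomial.derivative rr + Polynomial.C Polynomial.X * rr = KoszulAux.opB rr from rfl,
      hB]
  · apply KoszulAux.φ.injective
    rw [map_add, map_mul, KoszulAux.φ_pderiv1, KoszulAux.φ_X0,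
      AlgEquiv.apply_symm_apply]
    rw [show KoszulAux.dm rr + Polynomial.X * rr = KoszulAux.opA rr from rfl, hA]
end

section
/- Let R be a ring, M an R-module, and (G_k)_{k∈ℕ} an increasing chain of submodules of M that is exhaustive (the supremum of the G_k is all of M). Let φ and N be R-linear endomorphisms of M such that φ maps each G_k bijectively onto itself, N vanishes on G₀, and N(G_{k+1}) ⊆ G_k for all k. Then φ + N is bijective. -/
/-- Triangularity lemma: if `(G k)` is an increasing exhaustive chain of
submodules of `M`, `φ` maps each `G k` bijectively onto itself, `N` vanishes
on `G 0` and maps `G (k+1)` into `G k`, then `φ + N` is bijective. -/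
theorem triangular_perturbation_bijective
    (R : Type*) [Ring R] (M : Type*) [AddCommGroup M] [Module R M]
    (G : ℕ → Submodule R M) (hmono : Monotone G) (hexh : ⨆ k, G k = ⊤)
    (φ N : M →ₗ[R] M)
    (hφ : ∀ k, Set.BijOn φ (G k : Set M) (G k : Set M))
    (hN0 : ∀ x ∈ G 0, N x = 0)
    (hN : ∀ k, ∀ x ∈ G (k + 1), N x ∈ G k) :
    Function.Bijective (φ + N) := by
  have key : ∀ k, Set.BijOn (φ + N) (G k : Set M) (G k : Set M) := by
    intro k
    induction k with
    | zero =>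
      have heq : Set.EqOn (φ + N) φ (G 0 : Set M) := by
        intro x hx
        simp [hN0 x hx]
      exact (hφ 0).congr heq.symm
    | succ k ih =>
      have hsub : (G k : Set M) ⊆ (G (k+1) : Set M) := hmono (Nat.le_succ k)
      refine ⟨?_, ?_, ?_⟩
      · -- MapsTo
        intro x hx
        have : φ x + N x ∈ G (k+1) :=
          (G (k+1)).add_mem ((hφ (k+1)).mapsTo hx) (hsub (hN k x hx))
        simpa using this
      · -- InjOn
        intro x hx y hy hxy
        have h1 : φ x + N x = φ y + N y := by simpa using hxy
        have hd : x - y ∈ G (k+1) := (G (k+1)).sub_mem hx hy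
        have hz : (φ + N) (x - y) = 0 := by
          simp only [LinearMap.add_apply, map_sub]
          rw [h1, sub_self]
        have hφd : φ (x - y) ∈ (G k : Set M) := by
          have hNmem : N (x - y) ∈ G k := hN k _ hd
          have : φ (x - y) = -(N (x - y)) := by
            have := hz
            simp only [LinearMap.add_apply] at this
            linear_combination (norm := abel) this
          rw [this]
          exact (G k).neg_mem hNmem
        have hdGk : x - y ∈ (G k : Set M) := by
          obtain ⟨d', hd', hφd'⟩ := (hφ k).surjOn hφd
          have : d' = x - y := (hφ (k+1)).injOn (hsub hd') hd hφd'
          rwa [← this]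
        have : x - y = 0 := by
          have h0 : (0 : M) ∈ (G k : Set M) := (G k).zero_mem
          have : (φ + N) (x - y) = (φ + N) 0 := by simp [hz]
          exact ih.injOn hdGk h0 this
        exact sub_eq_zero.mp this
      · -- SurjOn
        intro y hy
        obtain ⟨x₁, hx₁, hφx₁⟩ := (hφ (k+1)).surjOn hy
        have hNx₁ : N x₁ ∈ (G k : Set M) := hN k _ hx₁
        obtain ⟨z, hz, hφz⟩ := ih.surjOn hNx₁
        refine ⟨x₁ - z, (G (k+1)).sub_mem hx₁ (hsub hz), ?_⟩
        simp only [LinearMap.add_apply, map_sub] at hφz ⊢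
        rw [hφz, hφx₁]
        abel
  have hmem : ∀ x : M, ∃ k, x ∈ G k := by
    intro x
    have : x ∈ ⨆ k, G k := hexh ▸ Submodule.mem_top
    exact (Submodule.mem_iSup_of_directed _ hmono.directed_le).mp this
  constructor
  · intro x y hxy
    obtain ⟨i, hi⟩ := hmem x
    obtain ⟨j, hj⟩ := hmem y
    exact (key (max i j)).injOn (hmono (le_max_left i j) hi)
      (hmono (le_max_right i j) hj) hxy
  · intro y
    obtain ⟨k, hk⟩ := hmem y
    obtain ⟨x, _, hx⟩ := (key k).surjOn hk
    exact ⟨x, hx⟩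
end
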